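/- arXiv:2408.16819 — 5 statements merged into one kernel-verified Lean document; each statement's English description precedes it below -/
import Mathlib

section
/- Let X be a symmetric positive definite n×n real matrix and V a d×n real matrix with VᵀV = X (with respect to a possibly indefinite bilinear form on ℝᵈ of signature (n₊,n₋) with n ≤ n₊). Then the boosted generalized error function admits the integral representation Φₙᴱ(V;x) = (det X)^{−1/2} ∫_{ℝⁿ} e^{−π (Vᵀx − u)ᵀ X^{−1} (Vᵀx − u)} ∏ᵢ sgn(uᵢ) du, where Vᵀx denotes the vector of scalar products (v₁·x,…,vₙ·x). -/
open MeasureTheory Matrix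

/-- The sign function with the convention `sgn 0 = 0`. -/
noncomputable def sgn (x : ℝ) : ℝ := if 0 < x then 1 else if x < 0 then -1 else 0

/-- The generalized error function
`E_n(M;u) = ∫_{ℝⁿ} e^{−π‖u−u'‖²} ∏ᵢ sgn((Mᵀu')ᵢ) du'`. -/
noncomputable def genErr (n : ℕ) (M : Matrix (Fin n) (Fin n) ℝ) (u : Fin n → ℝ) : ℝ :=
  ∫ u' : Fin n → ℝ,
    Real.exp (-Real.pi * ∑ i, (u i - u' i) ^ 2) * ∏ i, sgn (M.transpose.mulVec u' i)

lemma integral_comp_mulVec' {n : ℕ} (C : Matrix (Fin n) (Fin n) ℝ) (hC : C.det ≠ 0)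
    (g : (Fin n → ℝ) → ℝ) :
    ∫ u : Fin n → ℝ, g u = |C.det| * ∫ u' : Fin n → ℝ, g (C.mulVec u') := by
  have hinv : Invertible C := C.invertibleOfIsUnitDet (isUnit_iff_ne_zero.mpr hC)
  let e : (Fin n → ℝ) ≃ₗ[ℝ] (Fin n → ℝ) := C.toLinearEquiv' hinv
  have hce : Continuous e := LinearMap.continuous_on_pi _
  have hce' : Continuous e.symm := LinearMap.continuous_on_pi _
  let h : (Fin n → ℝ) ≃ₜ (Fin n → ℝ) := ⟨e.toEquiv, hce, hce'⟩
  have hemb : MeasurableEmbedding (fun v => C.mulVec v) := by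
    have : (fun v => C.mulVec v) = (h : (Fin n → ℝ) → (Fin n → ℝ)) := by
      funext v; show C *ᵥ v = Matrix.toLin' C v; rw [Matrix.toLin'_apply]
    rw [this]; exact h.measurableEmbedding
  have hmap : Measure.map (fun v => C.mulVec v) volume
      = ENNReal.ofReal |C.det⁻¹| • volume := by
    have := Real.map_matrix_volume_pi_eq_smul_volume_pi (ι := Fin n) hC
    have heq : (⇑(Matrix.toLin' C) : (Fin n → ℝ) → Fin n → ℝ) = fun v => C.mulVec v := by
      funext v; simp [Matrix.toLin'_apply]
    rwa [heq] at this
  have h1 : ∫ u', g (C.mulVec u') = ∫ y, g y ∂(Measure.map (fun v => C.mulVec v) volume) :=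
    (hemb.integral_map g).symm
  rw [h1, hmap, integral_smul_measure, ENNReal.toReal_ofReal (abs_nonneg _), smul_eq_mul,
    ← mul_assoc, abs_inv, mul_inv_cancel₀ (by simpa using hC), one_mul]


/-- Integral representation of the boosted generalized error function `Φₙᴱ(V;x)`.
Here the (possibly indefinite) bilinear form on `ℝᵈ` is `x·y = xᵀ G y` for a symmetric
matrix `G`; the matrix `B` has rows forming an orthonormal basis (`B G Bᵀ = 1`) of the
positive definite subspace spanned by the columns of `V` (`V = Bᵀ C`), and
`X = Vᵀ G V` is positive definite.  Then
`Φₙᴱ(V;x) = Eₙ(B·V; B·x)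
  = (det X)^{−1/2} ∫_{ℝⁿ} e^{−π (Vᵀx − u)ᵀ X⁻¹ (Vᵀx − u)} ∏ᵢ sgn(uᵢ) du`,
where `Vᵀx` denotes the vector of scalar products `(v₁·x,…,vₙ·x)`. -/
theorem boosted_genErr_integral_repr
    (d n : ℕ) (G : Matrix (Fin d) (Fin d) ℝ) (hG : G.IsSymm)
    (V : Matrix (Fin d) (Fin n) ℝ) (X : Matrix (Fin n) (Fin n) ℝ)
    (hX : X = Vᵀ * G * V) (hXpd : X.PosDef)
    (B : Matrix (Fin n) (Fin d) ℝ)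
    (hB : B * G * Bᵀ = 1)
    (hspan : ∃ C : Matrix (Fin n) (Fin n) ℝ, V = Bᵀ * C)
    (x : Fin d → ℝ) :
    genErr n (B * G * V) ((B * G).mulVec x) =
      X.det ^ (-(1:ℝ)/2) *
        ∫ u : Fin n → ℝ,
          Real.exp (-Real.pi *
            (((Vᵀ * G).mulVec x - u) ⬝ᵥ X⁻¹.mulVec ((Vᵀ * G).mulVec x - u))) *
          ∏ i, sgn (u i) := by
  obtain ⟨C, hVC⟩ := hspan
  have hBGV : B * G * V = C := by
    rw [hVC, ← Matrix.mul_assoc, hB, Matrix.one_mul]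
  have hX' : X = Cᵀ * C := by
    rw [hX, hVC, Matrix.transpose_mul, Matrix.transpose_transpose]
    calc Cᵀ * B * G * (Bᵀ * C) = Cᵀ * (B * G * Bᵀ) * C := by
          simp only [Matrix.mul_assoc]
      _ = Cᵀ * C := by rw [hB, Matrix.mul_one]
  have hdetX : X.det = C.det ^ 2 := by
    rw [hX', Matrix.det_mul, Matrix.det_transpose, sq]
  have hdetXpos : 0 < X.det := hXpd.det_pos
  have hdetC : C.det ≠ 0 := by
    intro h0; rw [hdetX, h0] at hdetXpos; simp at hdetXpos
  have hdetCT : Cᵀ.det ≠ 0 := by rwa [Matrix.det_transpose]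
  set w : Fin n → ℝ := (B * G).mulVec x with hw
  have hVGx : (Vᵀ * G).mulVec x = Cᵀ.mulVec w := by
    rw [hw, Matrix.mulVec_mulVec, hVC, Matrix.transpose_mul, Matrix.transpose_transpose,
      Matrix.mul_assoc]
  have hquad : ∀ v : Fin n → ℝ,
      (Cᵀ.mulVec v) ⬝ᵥ X⁻¹.mulVec (Cᵀ.mulVec v) = ∑ i, v i ^ 2 := by
    intro v
    have hXinv : X⁻¹ = C⁻¹ * (Cᵀ)⁻¹ := by rw [hX', Matrix.mul_inv_rev]
    have h1 : X⁻¹.mulVec (Cᵀ.mulVec v) = C⁻¹.mulVec v := by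
      rw [hXinv, Matrix.mulVec_mulVec, Matrix.mul_assoc,
        Matrix.nonsing_inv_mul _ (isUnit_iff_ne_zero.mpr hdetCT), Matrix.mul_one]
    rw [h1, Matrix.mulVec_transpose, Matrix.dotProduct_mulVec, Matrix.vecMul_vecMul,
      Matrix.mul_nonsing_inv _ (isUnit_iff_ne_zero.mpr hdetC), Matrix.vecMul_one]
    simp [dotProduct, sq]
  rw [integral_comp_mulVec' Cᵀ hdetCT
    (fun u => Real.exp (-Real.pi *
        (((Vᵀ * G).mulVec x - u) ⬝ᵥ X⁻¹.mulVec ((Vᵀ * G).mulVec x - u))) * ∏ i, sgn (u i))]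
  have hint : ∀ u' : Fin n → ℝ,
      Real.exp (-Real.pi *
          (((Vᵀ * G).mulVec x - Cᵀ.mulVec u') ⬝ᵥ
            X⁻¹.mulVec ((Vᵀ * G).mulVec x - Cᵀ.mulVec u'))) * ∏ i, sgn (Cᵀ.mulVec u' i)
      = Real.exp (-Real.pi * ∑ i, (w i - u' i) ^ 2) * ∏ i, sgn ((B * G * V)ᵀ.mulVec u' i) := by
    intro u'
    rw [hVGx, ← Matrix.mulVec_sub, hquad (w - u'), hBGV]
    simp [Pi.sub_apply]
  rw [show (∫ u' : Fin n → ℝ,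
      Real.exp (-Real.pi *
          (((Vᵀ * G).mulVec x - Cᵀ.mulVec u') ⬝ᵥ
            X⁻¹.mulVec ((Vᵀ * G).mulVec x - Cᵀ.mulVec u'))) * ∏ i, sgn (Cᵀ.mulVec u' i))
      = genErr n (B * G * V) w from by
    unfold genErr; exact integral_congr_ae (Filter.Eventually.of_forall fun u' => hint u')]
  have habs : X.det ^ (-(1:ℝ)/2) * |Cᵀ.det| = 1 := by
    rw [Matrix.det_transpose]
    have h2 : |C.det| = X.det ^ ((1:ℝ)/2) := by
      rw [hdetX, ← Real.sqrt_sq_eq_abs, Real.sqrt_eq_rpow]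
    rw [h2, ← Real.rpow_add (by rw [hdetX]; positivity)]
    norm_num
  rw [← mul_assoc, habs, one_mul]
end

section
/- The tree coefficients a_T defined recursively by a_T = (1/n_T) Σ_{v ∈ V_T} (−1)^{n_v^+} ∏_{s=1}^{n_v} a_{T_s(v)}, with a_• = 1 for the one-vertex tree, vanish for every oriented unrooted labelled tree T with an even number of vertices. -/
/-!
`a_T` is the average, over all orderings of the vertices of `T`, of the product over the edges
of `+1` if the edge points forward in the ordering and `-1` otherwise. Indeed this average
satisfies the recursion: splitting off the first vertex `v` of the ordering, every edge into `v`
points backward and every edge out of `v` points forward, which gives `(-1)^{n_v⁺}`; and the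
relative orderings of the components of `T - v` are independent, so the average is multiplicative
over them. Reversing the ordering flips the sign of each of the `n_T - 1` edges, so for even
`n_T` the average equals its own negative.
-/

open scoped Classical

/-- An (oriented, labelled) graph on a finite set of natural-number vertices,
given by its vertex set and an oriented edge relation. -/
structure DiGraph where
  verts : Finset ℕ
  E : ℕ → ℕ → Prop

namespace DiGraph

/-- The underlying (unoriented) simple graph on the vertex set. -/
def symGraph (G : DiGraph) : SimpleGraph {x : ℕ // x ∈ G.verts} where
  Adj a b := (G.E a.1 b.1 ∨ G.E b.1 a.1) ∧ a ≠ b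
  symm := ⟨fun a b h => ⟨h.1.symm, h.2.symm⟩⟩
  loopless := ⟨fun a h => h.2 rfl⟩

/-- `G` is an oriented unrooted labelled tree: its edges join vertices of `G`,
no edge occurs in both orientations, and the underlying simple graph is a tree. -/
def IsOTree (G : DiGraph) : Prop :=
  (∀ i j, G.E i j → i ∈ G.verts ∧ j ∈ G.verts) ∧
  (∀ i j, G.E i j → ¬ G.E j i) ∧
  G.symGraph.IsTree

/-- The number `n_v⁺` of edges oriented into the vertex `v`. -/
noncomputable def inDeg (G : DiGraph) (v : ℕ) : ℕ :=
  (G.verts.filter fun w => G.E w v).card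

/-- The graph obtained by deleting the vertex `v`. -/
def delV (G : DiGraph) (v : ℕ) : DiGraph :=
  ⟨G.verts.erase v, fun i j => G.E i j ∧ i ≠ v ∧ j ≠ v⟩

/-- The subgraph induced on a set `s` of vertices. -/
def induce (G : DiGraph) (s : Finset ℕ) : DiGraph :=
  ⟨s, fun i j => G.E i j ∧ i ∈ s ∧ j ∈ s⟩

/-- The vertex set of a connected component of (the underlying graph of) `G`. -/
noncomputable def compVerts (G : DiGraph) (c : G.symGraph.ConnectedComponent) : Finset ℕ :=
  G.verts.filter fun x => ∃ h : x ∈ G.verts, G.symGraph.connectedComponentMk ⟨x, h⟩ = c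

/-- The subgraph of `G` given by a connected component. -/
noncomputable def component (G : DiGraph) (c : G.symGraph.ConnectedComponent) : DiGraph :=
  G.induce (G.compVerts c)

/-- `a : DiGraph → ℚ` satisfies the defining recursion of the tree coefficients `a_T`:
`a_• = 1` for the one-vertex tree, and for a tree `T` with at least two vertices
`a_T = (1/n_T) Σ_{v ∈ V_T} (−1)^{n_v⁺} ∏_s a_{T_s(v)}`,
the product running over the connected components of `T` with the vertex `v` deleted. -/
def ARec (a : DiGraph → ℚ) : Prop :=
  (∀ G : DiGraph, G.IsOTree → G.verts.card = 1 → a G = 1) ∧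
  (∀ G : DiGraph, G.IsOTree → 2 ≤ G.verts.card →
    a G = (1 / (G.verts.card : ℚ)) * ∑ v ∈ G.verts, (-1 : ℚ) ^ (G.inDeg v) *
      ∏ᶠ c : (G.delV v).symGraph.ConnectedComponent, a ((G.delV v).component c))

end DiGraph

theorem List.idxOf_reverse_add_idxOf {α : Type*} [BEq α] [LawfulBEq α] {l : List α}
    (hl : l.Nodup) {x : α} (hx : x ∈ l) : l.reverse.idxOf x + l.idxOf x + 1 = l.length := by
  induction l with
  | nil => simp at hx
  | cons a t ih =>
    obtain ⟨hat, ht⟩ := List.nodup_cons.mp hl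
    rw [List.reverse_cons, List.length_cons]
    rcases eq_or_ne a x with rfl | hax
    · rw [List.idxOf_append_of_notMem (by simpa using hat), List.idxOf_cons_self]
      simp
    · have hxt : x ∈ t := (List.mem_cons.mp hx).resolve_left hax.symm
      rw [List.idxOf_append_of_mem (by simpa using hxt), List.idxOf_cons_ne _ hax, ← ih ht hxt]
      omega

namespace Finset

variable {α : Type*} [DecidableEq α]

noncomputable def orderings (S : Finset α) : Finset (List α) :=
  (Multiset.lists S.val).toFinset

theorem mem_orderings {S : Finset α} {l : List α} : l ∈ S.orderings ↔ S.val = l := by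
  simp [orderings, Multiset.mem_lists_iff]

theorem orderings_empty : (∅ : Finset α).orderings = {[]} := by
  ext l
  simp [mem_orderings, eq_comm (a := (0 : Multiset α))]

theorem orderings_eq_biUnion {S : Finset α} (hS : S.Nonempty) :
    S.orderings = S.biUnion fun v => (S.erase v).orderings.image (List.cons v) := by
  ext l
  simp only [mem_biUnion, mem_image, mem_orderings, erase_val]
  constructor
  · intro h
    cases l with
    | nil => simp [val_eq_zero.mp h] at hS
    | cons v l =>
      have hv : v ∈ S := by simp [← mem_val, h]
      refine ⟨v, hv, l, ?_, rfl⟩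
      rw [h, ← Multiset.cons_coe, Multiset.erase_cons_head]
  · rintro ⟨v, hv, l, hl, rfl⟩
    rw [← Multiset.cons_coe, ← hl, Multiset.cons_erase (mem_val.mpr hv)]

variable {M : Type*} [AddCommMonoid M]

theorem sum_orderings_eq_sum_cons {S : Finset α} (hS : S.Nonempty) (F : List α → M) :
    ∑ l ∈ S.orderings, F l = ∑ v ∈ S, ∑ l ∈ (S.erase v).orderings, F (v :: l) := by
  rw [orderings_eq_biUnion hS, sum_biUnion]
  · exact sum_congr rfl fun v _ => sum_image fun _ _ _ _ h => List.cons_injective h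
  · intro v _ w _ hvw
    simp only [Function.onFun, disjoint_left, mem_image]
    rintro _ ⟨l, -, rfl⟩ ⟨m, -, h⟩
    exact hvw (List.cons_eq_cons.mp h).1.symm

theorem sum_orderings_reverse (S : Finset α) (F : List α → M) :
    ∑ l ∈ S.orderings, F l.reverse = ∑ l ∈ S.orderings, F l :=
  sum_nbij' List.reverse List.reverse (by simp [mem_orderings]) (by simp [mem_orderings])
    (by simp) (by simp) (by simp)

end Finset

namespace DiGraph

noncomputable def edges (G : DiGraph) : Finset (ℕ × ℕ) :=
  (G.verts ×ˢ G.verts).filter fun p => G.E p.1 p.2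

theorem mem_edges {G : DiGraph} {p : ℕ × ℕ} :
    p ∈ G.edges ↔ p.1 ∈ G.verts ∧ p.2 ∈ G.verts ∧ G.E p.1 p.2 := by
  simp [edges, and_assoc]

noncomputable def orderSign (G : DiGraph) (l : List ℕ) : ℚ :=
  ∏ p ∈ G.edges, if l.idxOf p.1 < l.idxOf p.2 then 1 else -1

noncomputable def avgOrderSign (G : DiGraph) : ℚ :=
  (∑ l ∈ G.verts.orderings, G.orderSign l) / G.verts.card.factorial

theorem card_filter_edges_snd_eq {G : DiGraph} {v : ℕ} (hv : v ∈ G.verts) :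
    (G.edges.filter fun p => p.2 = v).card = G.inDeg v :=
  Finset.card_nbij' Prod.fst (fun w => (w, v))
    (fun p hp => by
      obtain ⟨he, rfl⟩ := Finset.mem_filter.mp hp
      exact Finset.mem_filter.mpr ⟨(mem_edges.mp he).1, (mem_edges.mp he).2.2⟩)
    (fun w hw => Finset.mem_filter.mpr
      ⟨mem_edges.mpr ⟨(Finset.mem_filter.mp hw).1, hv, (Finset.mem_filter.mp hw).2⟩, rfl⟩)
    (fun p hp => by rw [← (Finset.mem_filter.mp hp).2])
    (fun _ _ => rfl)

theorem edges_delV (G : DiGraph) (v : ℕ) :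
    (G.delV v).edges = G.edges.filter fun p => p.1 ≠ v ∧ p.2 ≠ v := by
  ext p
  simp only [mem_edges, Finset.mem_filter, delV, Finset.mem_erase]
  tauto

theorem orderSign_cons {G : DiGraph} {v : ℕ} (hv : v ∈ G.verts) (l : List ℕ) :
    G.orderSign (v :: l) = (-1) ^ G.inDeg v * (G.delV v).orderSign l := by
  have hsign : ∀ p : ℕ × ℕ,
      (if (v :: l).idxOf p.1 < (v :: l).idxOf p.2 then (1 : ℚ) else -1) =
        (if p.2 = v then -1 else 1) *
          if p.1 ≠ v ∧ p.2 ≠ v then (if l.idxOf p.1 < l.idxOf p.2 then 1 else -1) else 1 := by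
    intro p
    rcases eq_or_ne p.2 v with h2 | h2
    · simp [h2, List.idxOf_cons_self]
    rcases eq_or_ne p.1 v with h1 | h1
    · simp [h1, h2, List.idxOf_cons_self, List.idxOf_cons_ne _ (Ne.symm h2)]
    · simp [h1, h2, List.idxOf_cons_ne _ (Ne.symm h1), List.idxOf_cons_ne _ (Ne.symm h2)]
  rw [orderSign, orderSign, Finset.prod_congr rfl fun p _ => hsign p, Finset.prod_mul_distrib,
    ← Finset.prod_filter, ← Finset.prod_filter, Finset.prod_const, card_filter_edges_snd_eq hv,
    edges_delV]

theorem avgOrderSign_of_verts_eq_empty {G : DiGraph} (h : G.verts = ∅) :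
    G.avgOrderSign = 1 := by
  have : G.edges = ∅ := by simp [edges, h]
  simp [avgOrderSign, orderSign, h, this, Finset.orderings_empty]

theorem card_mul_avgOrderSign (G : DiGraph) :
    (G.verts.card : ℚ) * G.avgOrderSign =
      ∑ v ∈ G.verts, (-1) ^ G.inDeg v * (G.delV v).avgOrderSign := by
  obtain hG | hG := G.verts.eq_empty_or_nonempty
  · simp [hG]
  obtain ⟨m, hm⟩ : ∃ m, G.verts.card = m + 1 := ⟨_, (Nat.succ_pred_eq_of_pos hG.card_pos).symm⟩
  have hcard : ∀ v ∈ G.verts, (G.delV v).verts.card = m := fun v hv => by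
    simp [delV, Finset.card_erase_of_mem hv, hm]
  calc (G.verts.card : ℚ) * G.avgOrderSign
      = (∑ l ∈ G.verts.orderings, G.orderSign l) / m.factorial := by
        rw [avgOrderSign, hm, Nat.factorial_succ]
        push_cast
        field_simp
    _ = ∑ v ∈ G.verts, (-1) ^ G.inDeg v * (G.delV v).avgOrderSign := by
        rw [Finset.sum_orderings_eq_sum_cons hG, Finset.sum_div]
        refine Finset.sum_congr rfl fun v hv => ?_
        simp only [orderSign_cons hv, ← Finset.mul_sum, avgOrderSign, hcard v hv, mul_div_assoc]
        rfl

theorem delV_induce_erase (G : DiGraph) (A : Finset ℕ) (v : ℕ) :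
    (G.delV v).induce (A.erase v) = (G.induce A).delV v := by
  simp only [delV, induce, mk.injEq, true_and]
  ext i j
  simp only [Finset.mem_erase]
  tauto

theorem delV_induce_of_notMem (G : DiGraph) {B : Finset ℕ} {v : ℕ} (hv : v ∉ B) :
    (G.delV v).induce B = G.induce B := by
  simp only [delV, induce, mk.injEq, true_and]
  ext i j
  constructor
  · exact fun h => ⟨h.1.1, h.2⟩
  · exact fun h => ⟨⟨h.1, ne_of_mem_of_not_mem h.2.1 hv, ne_of_mem_of_not_mem h.2.2 hv⟩, h.2⟩

theorem induce_induce (G : DiGraph) {s t : Finset ℕ} (h : t ⊆ s) :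
    (G.induce s).induce t = G.induce t := by
  simp only [induce, mk.injEq, true_and]
  ext i j
  exact ⟨fun h' => ⟨h'.1.1, h'.2⟩, fun h' => ⟨⟨h'.1, h h'.2.1, h h'.2.2⟩, h'.2⟩⟩

theorem inDeg_induce {G : DiGraph} {A : Finset ℕ} {v : ℕ} (hA : A ⊆ G.verts) (hv : v ∈ A)
    (hE : ∀ w ∈ G.verts, G.E w v → w ∈ A) : (G.induce A).inDeg v = G.inDeg v := by
  unfold inDeg induce
  congr 1
  ext w
  simp only [Finset.mem_filter]
  exact ⟨fun h => ⟨hA h.1, h.2.1⟩, fun h => ⟨hE w h.1 h.2, h.2, hE w h.1 h.2, hv⟩⟩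

theorem avgOrderSign_eq_mul_of_noEdges {G : DiGraph} {A B : Finset ℕ}
    (hverts : G.verts = A ∪ B) (hAB : Disjoint A B)
    (hE : ∀ x ∈ A, ∀ y ∈ B, ¬ G.E x y ∧ ¬ G.E y x) :
    G.avgOrderSign = (G.induce A).avgOrderSign * (G.induce B).avgOrderSign := by
  induction hn : G.verts.card using Nat.strong_induction_on generalizing G A B with
  | _ n ih =>
  obtain hG | hG := G.verts.eq_empty_or_nonempty
  · obtain ⟨rfl, rfl⟩ := Finset.union_eq_empty.mp (hverts ▸ hG)
    simp [avgOrderSign_of_verts_eq_empty hG, avgOrderSign_of_verts_eq_empty (G := G.induce ∅) rfl]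
  -- For `v ∈ A`, the induction hypothesis splits `G.delV v` along `A.erase v ∪ B`.
  have hsum : ∀ A B : Finset ℕ, G.verts = A ∪ B → Disjoint A B →
      (∀ x ∈ A, ∀ y ∈ B, ¬ G.E x y ∧ ¬ G.E y x) →
      ∑ v ∈ A, (-1) ^ G.inDeg v * (G.delV v).avgOrderSign =
        A.card * (G.induce A).avgOrderSign * (G.induce B).avgOrderSign := by
    intro A B hverts hAB hE
    have hrec := card_mul_avgOrderSign (G.induce A)
    change (A.card : ℚ) * _ = ∑ v ∈ A, _ at hrec
    rw [hrec, Finset.sum_mul]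
    refine Finset.sum_congr rfl fun v hv => ?_
    have hvB : v ∉ B := Finset.disjoint_left.mp hAB hv
    have hdel : (G.delV v).avgOrderSign =
        ((G.delV v).induce (A.erase v)).avgOrderSign * ((G.delV v).induce B).avgOrderSign :=
      ih _ (hn ▸ Finset.card_erase_lt_of_mem (hverts ▸ Finset.mem_union_left B hv))
        (by simp [delV, hverts, Finset.erase_union_distrib, Finset.erase_eq_of_notMem hvB])
        (hAB.mono_left (Finset.erase_subset v A))
        (fun x hx y hy => ⟨fun h => (hE x (Finset.mem_of_mem_erase hx) y hy).1 h.1,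
          fun h => (hE x (Finset.mem_of_mem_erase hx) y hy).2 h.1⟩) rfl
    have hin : (G.induce A).inDeg v = G.inDeg v :=
      inDeg_induce (hverts ▸ Finset.subset_union_left) hv fun w hw hwv =>
        (Finset.mem_union.mp (hverts ▸ hw)).elim id fun hwB => absurd hwv (hE v hv w hwB).2
    rw [hdel, delV_induce_erase, delV_induce_of_notMem _ hvB, hin, mul_assoc]
  have hcard : (G.verts.card : ℚ) ≠ 0 := by exact_mod_cast hG.card_pos.ne'
  refine mul_left_cancel₀ hcard ?_
  rw [card_mul_avgOrderSign, hverts, Finset.sum_union hAB, hsum A B hverts hAB hE,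
    hsum B A (hverts.trans (Finset.union_comm A B)) hAB.symm
      (fun x hx y hy => (hE y hy x hx).symm), Finset.card_union_of_disjoint hAB]
  push_cast
  ring

theorem avgOrderSign_eq_prod_of_noEdges {ι : Type*} (I : Finset ι) (B : ι → Finset ℕ)
    {G : DiGraph} (hverts : G.verts = I.biUnion B) (hdisj : (I : Set ι).PairwiseDisjoint B)
    (hE : ∀ i ∈ I, ∀ x ∈ B i, ∀ y ∈ G.verts, G.E x y ∨ G.E y x → y ∈ B i) :
    G.avgOrderSign = ∏ i ∈ I, (G.induce (B i)).avgOrderSign := by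
  induction I using Finset.induction_on generalizing G with
  | empty => simpa using avgOrderSign_of_verts_eq_empty hverts
  | insert i₀ I hi₀ ih =>
    set U := I.biUnion B
    have hU : U ⊆ G.verts := hverts ▸ Finset.biUnion_subset_biUnion_of_subset_left B
      (Finset.subset_insert i₀ I)
    have hdisjU : Disjoint (B i₀) U := (Finset.disjoint_biUnion_right _ _ _).mpr fun i hi =>
      hdisj (Finset.mem_insert_self i₀ I) (Finset.mem_insert_of_mem hi) (fun h => hi₀ (h ▸ hi))
    have hsplit := avgOrderSign_eq_mul_of_noEdges (hverts.trans Finset.biUnion_insert) hdisjU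
      fun x hx y hy => ⟨fun h => Finset.disjoint_right.mp hdisjU hy
          (hE i₀ (Finset.mem_insert_self i₀ I) x hx y (hU hy) (Or.inl h)),
        fun h => Finset.disjoint_right.mp hdisjU hy
          (hE i₀ (Finset.mem_insert_self i₀ I) x hx y (hU hy) (Or.inr h))⟩
    have hrest := ih (G := G.induce U) rfl (hdisj.subset (Finset.subset_insert i₀ I))
      fun i hi x hx y hy h => hE i (Finset.mem_insert_of_mem hi) x hx y (hU hy)
        (h.imp And.left And.left)
    rw [hsplit, hrest, Finset.prod_insert hi₀]
    congr 1
    exact Finset.prod_congr rfl fun i hi => by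
      rw [induce_induce _ (Finset.subset_biUnion_of_mem B hi)]

theorem mem_compVerts {H : DiGraph} {c : H.symGraph.ConnectedComponent} {x : ℕ} :
    x ∈ H.compVerts c ↔ ∃ h : x ∈ H.verts, H.symGraph.connectedComponentMk ⟨x, h⟩ = c := by
  simp only [compVerts, Finset.mem_filter]
  exact ⟨fun h => h.2, fun h => ⟨h.1, h⟩⟩

theorem verts_eq_biUnion_compVerts (H : DiGraph) :
    H.verts = Finset.univ.biUnion H.compVerts := by
  ext x
  simp only [Finset.mem_biUnion, Finset.mem_univ, true_and, mem_compVerts]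
  exact ⟨fun hx => ⟨_, hx, rfl⟩, fun ⟨_, hx, _⟩ => hx⟩

theorem pairwiseDisjoint_compVerts (H : DiGraph) :
    (Set.univ : Set H.symGraph.ConnectedComponent).PairwiseDisjoint H.compVerts := by
  intro c _ c' _ hcc'
  refine Finset.disjoint_left.mpr fun x hx hx' => hcc' ?_
  obtain ⟨_, rfl⟩ := mem_compVerts.mp hx
  obtain ⟨_, rfl⟩ := mem_compVerts.mp hx'
  rfl

theorem mem_compVerts_of_edge {H : DiGraph} {c : H.symGraph.ConnectedComponent} {x y : ℕ}
    (hx : x ∈ H.compVerts c) (hy : y ∈ H.verts) (hxy : H.E x y ∨ H.E y x) :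
    y ∈ H.compVerts c := by
  obtain ⟨_, rfl⟩ := mem_compVerts.mp hx
  rcases eq_or_ne x y with rfl | hne
  · exact hx
  refine mem_compVerts.mpr ⟨hy, (SimpleGraph.ConnectedComponent.sound ?_).symm⟩
  exact SimpleGraph.Adj.reachable (G := H.symGraph) ⟨hxy, fun h => hne (congrArg Subtype.val h)⟩

theorem avgOrderSign_eq_finprod_component (H : DiGraph) :
    H.avgOrderSign = ∏ᶠ c, (H.component c).avgOrderSign := by
  rw [finprod_eq_prod_of_fintype]
  exact avgOrderSign_eq_prod_of_noEdges _ _ H.verts_eq_biUnion_compVerts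
    (by simpa using H.pairwiseDisjoint_compVerts) fun _ _ _ hx _ hy => mem_compVerts_of_edge hx hy

theorem connected_symGraph_component (H : DiGraph) (c : H.symGraph.ConnectedComponent) :
    (H.component c).symGraph.Connected := by
  have hmem : ∀ u : c, u.1.1 ∈ H.compVerts c := fun u => mem_compVerts.mpr ⟨u.1.2, u.2⟩
  let f : c.toSimpleGraph →g (H.component c).symGraph :=
    { toFun := fun u => ⟨u.1.1, hmem u⟩
      map_rel' := fun {u w} ⟨hE, hne⟩ =>
        ⟨hE.imp (fun h => ⟨h, hmem u, hmem w⟩) (fun h => ⟨h, hmem w, hmem u⟩),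
          fun h => hne (Subtype.ext (Subtype.mk.inj h))⟩ }
  refine c.connected_toSimpleGraph.map f fun y => ?_
  obtain ⟨hy, hc⟩ := mem_compVerts.mp y.2
  exact ⟨⟨⟨y.1, hy⟩, hc⟩, rfl⟩

theorem isAcyclic_symGraph_of_le {G H : DiGraph} (hV : H.verts ⊆ G.verts)
    (hE : ∀ i j, H.E i j → G.E i j) (hG : G.symGraph.IsAcyclic) : H.symGraph.IsAcyclic := by
  let f : H.symGraph →g G.symGraph :=
    { toFun := fun x => ⟨x.1, hV x.2⟩
      map_rel' := fun {x y} h =>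
        ⟨h.1.imp (hE _ _) (hE _ _), fun h' => h.2 (Subtype.ext (Subtype.mk.inj h'))⟩ }
  exact hG.comap f fun x y h => Subtype.ext (Subtype.mk.inj h)

theorem IsOTree.not_E_self {G : DiGraph} (hG : G.IsOTree) (i : ℕ) : ¬ G.E i i :=
  fun h => hG.2.1 i i h h

theorem IsOTree.verts_nonempty {G : DiGraph} (hG : G.IsOTree) : G.verts.Nonempty :=
  let ⟨x⟩ := hG.2.2.connected.nonempty
  ⟨x.1, x.2⟩

theorem IsOTree.component_delV {G : DiGraph} (hG : G.IsOTree) (v : ℕ)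
    (c : (G.delV v).symGraph.ConnectedComponent) : ((G.delV v).component c).IsOTree :=
  ⟨fun _ _ h => h.2, fun i j h h' => hG.2.1 i j h.1.1 h'.1.1,
    ⟨connected_symGraph_component _ c,
      isAcyclic_symGraph_of_le
        (fun _ hx => Finset.mem_of_mem_erase (Finset.mem_of_mem_filter _ hx))
        (fun _ _ h => h.1.1) hG.2.2.isAcyclic⟩⟩

theorem card_component_delV_lt {G : DiGraph} {v : ℕ} (hv : v ∈ G.verts)
    (c : (G.delV v).symGraph.ConnectedComponent) :
    ((G.delV v).component c).verts.card < G.verts.card :=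
  (Finset.card_le_card (Finset.filter_subset _ _)).trans_lt (Finset.card_erase_lt_of_mem hv)

theorem IsOTree.card_edges_add_one {G : DiGraph} (hG : G.IsOTree) :
    G.edges.card + 1 = G.verts.card := by
  rw [← Fintype.card_coe G.verts, ← hG.2.2.card_edgeFinset]
  congr 1
  refine Finset.card_bij
    (fun p hp => s(⟨p.1, (mem_edges.mp hp).1⟩, ⟨p.2, (mem_edges.mp hp).2.1⟩))
    (fun p hp => ?_) (fun p hp q hq h => ?_) (fun e he => ?_)
  · obtain ⟨-, -, hE⟩ := mem_edges.mp hp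
    exact SimpleGraph.mem_edgeFinset.mpr ⟨Or.inl hE, fun h => hG.not_E_self p.1 (by
      rw [Subtype.mk.inj h] at hE ⊢; exact hE)⟩
  · rcases Sym2.eq_iff.mp h with ⟨h1, h2⟩ | ⟨h1, h2⟩
    · exact Prod.ext (Subtype.mk.inj h1) (Subtype.mk.inj h2)
    · refine absurd (mem_edges.mp hq).2.2 ?_
      rw [← Subtype.mk.inj h1, ← Subtype.mk.inj h2]
      exact hG.2.1 _ _ (mem_edges.mp hp).2.2
  · induction e with
    | h x y =>
      obtain ⟨hxy | hyx, -⟩ := SimpleGraph.mem_edgeFinset.mp he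
      · exact ⟨(x.1, y.1), mem_edges.mpr ⟨x.2, y.2, hxy⟩, rfl⟩
      · exact ⟨(y.1, x.1), mem_edges.mpr ⟨y.2, x.2, hyx⟩, Sym2.eq_swap⟩

theorem orderSign_reverse {G : DiGraph} (hirr : ∀ i, ¬ G.E i i) {l : List ℕ}
    (hl : l ∈ G.verts.orderings) :
    G.orderSign l.reverse = (-1) ^ G.edges.card * G.orderSign l := by
  have hnd : l.Nodup := Multiset.coe_nodup.mp (Finset.mem_orderings.mp hl ▸ G.verts.nodup)
  have hmem : ∀ x ∈ G.verts, x ∈ l := fun x hx => by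
    simpa [← Multiset.mem_coe, ← Finset.mem_orderings.mp hl] using hx
  rw [orderSign, orderSign, ← Finset.prod_const, ← Finset.prod_mul_distrib]
  refine Finset.prod_congr rfl fun p hp => ?_
  obtain ⟨h1, h2, hE⟩ := mem_edges.mp hp
  have hrev₁ := List.idxOf_reverse_add_idxOf hnd (hmem _ h1)
  have hrev₂ := List.idxOf_reverse_add_idxOf hnd (hmem _ h2)
  have hne : l.idxOf p.1 ≠ l.idxOf p.2 := fun h =>
    hirr p.1 (((List.idxOf_inj (hmem _ h1)).mp h) ▸ hE)
  by_cases h : l.idxOf p.1 < l.idxOf p.2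
  · rw [if_neg (by omega), if_pos h]; norm_num
  · rw [if_pos (by omega), if_neg h]; norm_num

theorem IsOTree.avgOrderSign_eq_zero {G : DiGraph} (hG : G.IsOTree)
    (heven : Even G.verts.card) : G.avgOrderSign = 0 := by
  have hodd : Odd G.edges.card := by
    have := hG.card_edges_add_one
    obtain ⟨k, hk⟩ := heven
    exact ⟨k - 1, by omega⟩
  have hsum : ∑ l ∈ G.verts.orderings, G.orderSign l =
      -∑ l ∈ G.verts.orderings, G.orderSign l := by
    conv_lhs => rw [← Finset.sum_orderings_reverse]
    rw [Finset.sum_congr rfl fun l hl => orderSign_reverse hG.not_E_self hl, hodd.neg_one_pow]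
    simp
  rw [avgOrderSign, neg_eq_self.mp hsum.symm, zero_div]

theorem IsOTree.avgOrderSign_of_card_eq_one {G : DiGraph} (hG : G.IsOTree)
    (h : G.verts.card = 1) : G.avgOrderSign = 1 := by
  obtain ⟨v, hv⟩ := Finset.card_eq_one.mp h
  have hrec := card_mul_avgOrderSign G
  have hin : G.inDeg v = 0 := by simp [inDeg, hv, hG.not_E_self]
  rwa [h, hv, Finset.sum_singleton, hin,
    avgOrderSign_of_verts_eq_empty (G := G.delV v) (by simp [delV, hv]),
    Nat.cast_one, one_mul, pow_zero, one_mul] at hrec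

theorem ARec.eq_avgOrderSign {a : DiGraph → ℚ} (ha : ARec a) {G : DiGraph} (hG : G.IsOTree) :
    a G = G.avgOrderSign := by
  induction hn : G.verts.card using Nat.strong_induction_on generalizing G with
  | _ n ih =>
  obtain h1 | h2 : G.verts.card = 1 ∨ 2 ≤ G.verts.card := by
    have := hG.verts_nonempty.card_pos
    omega
  · rw [ha.1 G hG h1, hG.avgOrderSign_of_card_eq_one h1]
  have hcomp : ∀ v ∈ G.verts, ∏ᶠ c, a ((G.delV v).component c) = (G.delV v).avgOrderSign :=
    fun v hv => by
      rw [avgOrderSign_eq_finprod_component]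
      exact finprod_congr fun c =>
        ih _ (hn ▸ card_component_delV_lt hv c) (hG.component_delV v c) rfl
  have hcard : (G.verts.card : ℚ) ≠ 0 := by exact_mod_cast hG.verts_nonempty.card_pos.ne'
  rw [ha.2 G hG h2, Finset.sum_congr rfl fun v hv => by rw [hcomp v hv],
    ← card_mul_avgOrderSign, one_div, inv_mul_cancel_left₀ hcard]

end DiGraph

/-- The tree coefficients `a_T` defined recursively by
`a_T = (1/n_T) Σ_{v ∈ V_T} (−1)^{n_v⁺} ∏_{s=1}^{n_v} a_{T_s(v)}`, with `a_• = 1` for the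
one-vertex tree, vanish for every oriented unrooted labelled tree with an even number of
vertices. -/
theorem aT_vanishes_for_even_trees (a : DiGraph → ℚ) (ha : DiGraph.ARec a) :
    ∀ G : DiGraph, G.IsOTree → Even G.verts.card → a G = 0 := by
  intro G hG heven
  rw [ha.eq_avgOrderSign hG, hG.avgOrderSign_eq_zero heven]
end

section
/- For the linear tree L_n = •—•—···—• with n vertices and all edges oriented in the same direction, the coefficient a_{L_n} defined by the recursion a_T = (1/n_T) Σ_{v} (−1)^{n_v^+} ∏_s a_{T_s(v)}, a_• = 1, satisfies: a_{L₁}=1, a_{L₃}=−1/3, a_{L₅}=2/15, a_{L₇}=−17/315, and a_{L_n}=0 for even n. -/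
open scoped Classical

/-- The linear tree `L_{n+1} = •—•—···—•` with `n+1` vertices `0,…,n` and all edges
`i → i+1` oriented in the same direction. -/
def linTree (n : ℕ) : DiGraph :=
  ⟨Finset.range (n + 1), fun i j => j = i + 1 ∧ j ≤ n⟩

/-!
Deleting a vertex `v` of the directed path leaves the two directed paths to the left and to
the right of `v`, and `(-1)^{n_v⁺}` is `+1` exactly at the source. Since the recursion only
sees these shapes, by strong induction `a` takes the same value `c_n` on every path with `n`
vertices, where `c_0 = 1` and `(k+1) c_{k+1} = Σ_{i ≤ k} ±c_i c_{k-i}` (sign `+` only for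
`i = 0`). In that sum for `k` odd the terms with `0 < i < k` vanish by induction, as one of
`i`, `k - i` is even and positive, and the two end terms cancel; so `c_n = 0` for even `n`.
The remaining values are computed from the recursion.
-/

open Finset

/-- `pathCoeff n` is the coefficient of the path with `n` vertices; `pathCoeff 0 = 1` accounts
for an empty side of a deleted vertex. For `n ≥ 1` it is the `n`-th Taylor coefficient of
`tanh`, the recursion being `tanh' = 1 - tanh²`. -/
def pathCoeff : ℕ → ℚ
  | 0 => 1
  | k + 1 => 1 / (k + 1 : ℚ) *
      ∑ i : Fin (k + 1), (if (i : ℕ) = 0 then 1 else -1) * pathCoeff i * pathCoeff (k - i)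

theorem pathCoeff_zero : pathCoeff 0 = 1 := by
  rw [pathCoeff]

theorem pathCoeff_succ (k : ℕ) : pathCoeff (k + 1) = 1 / (k + 1 : ℚ) *
    ∑ i ∈ range (k + 1), (if i = 0 then 1 else -1) * pathCoeff i * pathCoeff (k - i) := by
  rw [pathCoeff, Fin.sum_univ_eq_sum_range
    (fun i => (if i = 0 then (1 : ℚ) else -1) * pathCoeff i * pathCoeff (k - i))]

theorem pathCoeff_one : pathCoeff 1 = 1 := by
  simp [pathCoeff_succ, pathCoeff_zero]

theorem pathCoeff_eq_zero_of_even {n : ℕ} (hn : Even n) (h0 : n ≠ 0) : pathCoeff n = 0 := by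
  induction n using Nat.strong_induction_on with
  | _ n ih =>
  obtain ⟨t, rfl⟩ : ∃ t, n = 2 * t + 2 := by
    obtain ⟨s, rfl⟩ := hn
    exact ⟨s - 1, by omega⟩
  have hmid : ∀ j ∈ range (2 * t), (if j + 1 = 0 then 1 else -1) * pathCoeff (j + 1) *
      pathCoeff (2 * t + 1 - (j + 1)) = 0 := by
    intro j hj
    rw [mem_range] at hj
    rcases Nat.even_or_odd j with ⟨r, hr⟩ | hodd
    · rw [ih (2 * t + 1 - (j + 1)) (by omega) ⟨t - r, by omega⟩ (by omega), mul_zero]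
    · rw [ih _ (by omega) hodd.add_one (by omega), mul_zero, zero_mul]
  rw [pathCoeff_succ, sum_range_succ, sum_range_succ', sum_eq_zero hmid]
  simp [pathCoeff_zero]

theorem SimpleGraph.Reachable.iff_of_forall_adj {V : Type*} {G : SimpleGraph V} (p : V → Prop)
    (hp : ∀ x y, G.Adj x y → (p x ↔ p y)) {x y : V} (h : G.Reachable x y) : p x ↔ p y := by
  rw [SimpleGraph.reachable_iff_reflTransGen] at h
  induction h with
  | refl => rfl
  | tail _ hadj ih => exact ih.trans (hp _ _ hadj)

theorem SimpleGraph.finprod_connectedComponent_eq_prod {V M : Type*} [CommMonoid M]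
    {G : SimpleGraph V} (f : G.ConnectedComponent → M) {s : Finset V}
    (hcover : ∀ x, ∃ y ∈ s, G.Reachable y x)
    (hsep : ∀ x ∈ s, ∀ y ∈ s, G.Reachable x y → x = y) :
    ∏ᶠ c, f c = ∏ x ∈ s, f (G.connectedComponentMk x) := by
  rw [← prod_image fun x hx y hy h => hsep x hx y hy (SimpleGraph.ConnectedComponent.exact h)]
  refine finprod_eq_prod_of_mulSupport_subset f fun c _ => ?_
  obtain ⟨x, rfl⟩ := c.exists_rep
  obtain ⟨y, hy, hyx⟩ := hcover x
  exact mem_image.2 ⟨y, hy, SimpleGraph.ConnectedComponent.sound hyx⟩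

namespace DiGraph

attribute [ext] DiGraph

def chain (S : Finset ℕ) : DiGraph :=
  ⟨S, fun i j => j = i + 1 ∧ i ∈ S ∧ j ∈ S⟩

def path (m n : ℕ) : DiGraph :=
  chain (Ico m (m + n))

section Chain

variable {S : Finset ℕ}

theorem chain_adj {x y : {k // k ∈ (chain S).verts}} :
    (chain S).symGraph.Adj x y ↔ y.1 = x.1 + 1 ∨ x.1 = y.1 + 1 := by
  refine ⟨fun ⟨h, _⟩ => h.imp And.left And.left, fun h => ⟨?_, ?_⟩⟩
  · exact h.imp (fun h => ⟨h, x.2, y.2⟩) (fun h => ⟨h, y.2, x.2⟩)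
  · rintro rfl; omega

theorem chain_reachable_iff {x y : {k // k ∈ (chain S).verts}} (hxy : x.1 ≤ y.1) :
    (chain S).symGraph.Reachable x y ↔ ∀ k, x.1 ≤ k → k ≤ y.1 → k ∈ S := by
  constructor
  · intro h k hxk hky
    by_contra hk
    have hx : x.1 ≠ k := fun h => hk (h ▸ x.2)
    have := h.iff_of_forall_adj (fun u => u.1 < k) fun u w huw => by
      have : u.1 ≠ k := fun h => hk (h ▸ u.2)
      have : w.1 ≠ k := fun h => hk (h ▸ w.2)
      rcases chain_adj.1 huw with h | h <;> omega
    omega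
  · obtain ⟨x, hx⟩ := x
    obtain ⟨y, hy⟩ := y
    obtain ⟨d, rfl⟩ := Nat.exists_eq_add_of_le hxy
    dsimp only at hy ⊢
    clear hxy
    intro h
    induction d with
    | zero => rfl
    | succ d ih =>
      have hd : x + d ∈ S := h _ (by omega) (by omega)
      exact (ih hd fun k h1 h2 => h k h1 (by omega)).trans
        (chain_adj.2 (Or.inl rfl)).reachable

theorem chain_isAcyclic : (chain S).symGraph.IsAcyclic := by
  refine SimpleGraph.isAcyclic_iff_forall_adj_isBridge.2 fun x y hxy => ?_
  wlog h : y.1 = x.1 + 1 generalizing x y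
  · rw [Sym2.eq_swap]
    exact this y x hxy.symm ((chain_adj.1 hxy).resolve_left h)
  rw [SimpleGraph.isBridge_iff]
  intro hr
  have := hr.iff_of_forall_adj (·.1 ≤ x.1) fun u w huw => by
    rw [SimpleGraph.deleteEdges_adj, Set.mem_singleton_iff, Sym2.eq_iff] at huw
    simp only [Subtype.ext_iff] at huw
    rcases chain_adj.1 huw.1 with h | h <;> omega
  omega

theorem chain_delV (v : ℕ) : (chain S).delV v = chain (S.erase v) := by
  ext i j
  · rfl
  · simp only [chain, delV, mem_erase]; tauto

theorem chain_induce {T : Finset ℕ} (h : T ⊆ S) : (chain S).induce T = chain T := by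
  ext i j
  · rfl
  · simp only [chain, induce]
    exact ⟨fun ⟨⟨h1, _⟩, h2⟩ => ⟨h1, h2⟩,
      fun ⟨h1, h2, h3⟩ => ⟨⟨h1, h h2, h h3⟩, h2, h3⟩⟩

end Chain

theorem component_chain {S : Finset ℕ} (c : (chain S).symGraph.ConnectedComponent) :
    (chain S).component c = chain ((chain S).compVerts c) :=
  chain_induce (filter_subset _ _)

section Path

variable {m n v : ℕ}

theorem path_isOTree (hn : 0 < n) : (path m n).IsOTree := by
  refine ⟨fun i j h => ⟨h.2.1, h.2.2⟩, fun i j ⟨h, _⟩ ⟨h', _⟩ => by omega, ?_,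
    chain_isAcyclic⟩
  have : Nonempty {k // k ∈ (path m n).verts} := ⟨⟨m, by simp [path, chain]; omega⟩⟩
  refine ⟨fun x y => ?_⟩
  wlog hxy : x.1 ≤ y.1 generalizing x y
  · exact (this y x (by omega)).symm
  have hx := x.2; have hy := y.2
  simp only [path, chain, mem_Ico] at hx hy
  exact (chain_reachable_iff hxy).2 fun k h1 h2 => mem_Ico.2 (by omega)

theorem inDeg_path (hv : v ∈ Ico m (m + n)) : (path m n).inDeg v = if v = m then 0 else 1 := by
  rw [mem_Ico] at hv
  split_ifs with h
  · simp [inDeg, path, chain, filter_eq_empty_iff]; omega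
  · rw [inDeg, card_eq_one]
    exact ⟨v - 1, by ext w; simp [path, chain]; omega⟩

theorem reachable_chain_erase_iff {x y : {k // k ∈ (chain ((Ico m (m + n)).erase v)).verts}} :
    (chain ((Ico m (m + n)).erase v)).symGraph.Reachable x y ↔ (x.1 < v ↔ y.1 < v) := by
  wlog hxy : x.1 ≤ y.1 generalizing x y
  · rw [SimpleGraph.reachable_comm, this (by omega)]
    exact Iff.comm
  have hx := x.2; have hy := y.2
  simp only [chain, mem_erase, mem_Ico] at hx hy
  rw [chain_reachable_iff hxy]
  constructor
  · intro h
    have := h v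
    simp only [mem_erase, ne_eq, not_true_eq_false, false_and, imp_false, not_le] at this
    omega
  · intro h k h1 h2
    simp only [mem_erase, mem_Ico]
    omega

theorem compVerts_chain_erase (hv : v ∈ Ico m (m + n))
    (x : {k // k ∈ (chain ((Ico m (m + n)).erase v)).verts}) :
    (chain ((Ico m (m + n)).erase v)).compVerts
      ((chain ((Ico m (m + n)).erase v)).symGraph.connectedComponentMk x) =
      if x.1 < v then Ico m v else Ico (v + 1) (m + n) := by
  have hx := x.2
  simp only [chain, mem_erase, mem_Ico] at hv hx
  ext y
  simp only [compVerts, mem_filter, SimpleGraph.ConnectedComponent.eq,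
    reachable_chain_erase_iff]
  split_ifs <;> simp [chain] <;> omega

theorem component_chain_erase (hv : v ∈ Ico m (m + n))
    (x : {k // k ∈ (chain ((Ico m (m + n)).erase v)).verts}) :
    (chain ((Ico m (m + n)).erase v)).component
      ((chain ((Ico m (m + n)).erase v)).symGraph.connectedComponentMk x) =
      if x.1 < v then path m (v - m) else path (v + 1) (m + n - (v + 1)) := by
  have hv' := mem_Ico.1 hv
  rw [component_chain, compVerts_chain_erase hv, path, path, Nat.add_sub_cancel' hv'.1,
    Nat.add_sub_cancel' (by omega : v + 1 ≤ m + n), apply_ite chain]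

theorem finprod_component_chain_erase {M : Type*} [CommMonoid M] (f : DiGraph → M)
    (hv : v ∈ Ico m (m + n)) (hn : 2 ≤ n) :
    ∏ᶠ c, f ((chain ((Ico m (m + n)).erase v)).component c) =
      (if 0 < v - m then f (path m (v - m)) else 1) *
        (if 0 < m + n - (v + 1) then f (path (v + 1) (m + n - (v + 1))) else 1) := by
  have hv' := mem_Ico.1 hv
  set G := chain ((Ico m (m + n)).erase v)
  have hmem : ∀ k, m ≤ k → k < m + n → k ≠ v → k ∈ G.verts :=
    fun k h1 h2 hkv => mem_erase.2 ⟨hkv, mem_Ico.2 ⟨h1, h2⟩⟩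
  have hx : ∀ x : {k // k ∈ G.verts}, x.1 ≠ v ∧ m ≤ x.1 ∧ x.1 < m + n := fun x => by
    simpa [G, chain] using x.2
  have key (s : Finset {k // k ∈ G.verts}) (hcover : ∀ x, ∃ y ∈ s, (y.1 < v ↔ x.1 < v))
      (hsep : ∀ x ∈ s, ∀ y ∈ s, (x.1 < v ↔ y.1 < v) → x.1 = y.1) :
      ∏ᶠ c, f (G.component c) =
        ∏ x ∈ s, f (G.component (G.symGraph.connectedComponentMk x)) :=
    SimpleGraph.finprod_connectedComponent_eq_prod _
      (fun x => (hcover x).imp fun _ => And.imp_right reachable_chain_erase_iff.2)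
      fun x hx y hy h => Subtype.ext (hsep x hx y hy (reachable_chain_erase_iff.1 h))
  by_cases hl : m < v <;> by_cases hr : v + 1 < m + n
  · let l : {k // k ∈ G.verts} := ⟨m, hmem m le_rfl (by omega) (by omega)⟩
    let r : {k // k ∈ G.verts} := ⟨m + n - 1, hmem _ (by omega) (by omega) (by omega)⟩
    rw [key {l, r}, prod_pair (by simp [l, r]; omega), component_chain_erase hv,
      component_chain_erase hv, if_pos hl, if_neg (show ¬ m + n - 1 < v by omega),
      if_pos (show 0 < v - m by omega), if_pos (show 0 < m + n - (v + 1) by omega)]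
    · intro x
      by_cases h : x.1 < v
      · exact ⟨l, by simp, by simp [l]; omega⟩
      · exact ⟨r, by simp, by simp [r]; omega⟩
    · simp only [mem_insert, mem_singleton]
      rintro x (rfl | rfl) y (rfl | rfl) h <;> simp [l, r] at h ⊢ <;> omega
  · let l : {k // k ∈ G.verts} := ⟨m, hmem m le_rfl (by omega) (by omega)⟩
    rw [key {l}, prod_singleton, component_chain_erase hv, if_pos hl,
      if_pos (show 0 < v - m by omega), if_neg (show ¬ 0 < m + n - (v + 1) by omega), mul_one]
    · exact fun x => ⟨l, by simp, by have := hx x; simp [l]; omega⟩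
    · simp
  · let r : {k // k ∈ G.verts} := ⟨m + n - 1, hmem _ (by omega) (by omega) (by omega)⟩
    rw [key {r}, prod_singleton, component_chain_erase hv, if_neg (show ¬ 0 < v - m by omega),
      if_neg (show ¬ m + n - 1 < v by omega), if_pos (show 0 < m + n - (v + 1) by omega),
      one_mul]
    · exact fun x => ⟨r, by simp, by have := hx x; simp [r]; omega⟩
    · simp
  · omega

end Path

theorem ARec.apply_path_eq_pathCoeff {a : DiGraph → ℚ} (ha : ARec a) :
    ∀ n, 0 < n → ∀ m, a (path m n) = pathCoeff n := by
  intro n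
  induction n using Nat.strong_induction_on with
  | _ n ih =>
  intro hn m
  obtain rfl | hn2 : n = 1 ∨ 2 ≤ n := by omega
  · rw [ha.1 _ (path_isOTree hn) (by simp [path, chain]), pathCoeff_one]
  obtain ⟨k, rfl⟩ : ∃ k, n = k + 1 := ⟨n - 1, by omega⟩
  have hcard : (path m (k + 1)).verts.card = k + 1 := by simp [path, chain]
  have hsub (j : ℕ) (hj : j < k + 1) (m' : ℕ) :
      (if 0 < j then a (path m' j) else 1) = pathCoeff j := by
    split_ifs with h
    · exact ih j hj h m'
    · rw [Nat.eq_zero_of_not_pos h, pathCoeff_zero]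
  rw [ha.2 _ (path_isOTree hn) (by omega), hcard, pathCoeff_succ,
    show (path m (k + 1)).verts = Ico m (m + (k + 1)) from rfl, sum_Ico_eq_sum_range,
    Nat.add_sub_cancel_left]
  push_cast
  congr 1
  refine sum_congr rfl fun i hi => ?_
  have hi' := mem_range.1 hi
  rw [inDeg_path (by simp; omega), path, chain_delV,
    finprod_component_chain_erase a (by simp; omega) hn2, Nat.add_sub_cancel_left,
    show m + (k + 1) - (m + i + 1) = k - i by omega, hsub i hi', hsub (k - i) (by omega)]
  simp only [Nat.add_eq_left]
  split_ifs <;> ring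

theorem linTree_eq_path (n : ℕ) : linTree n = path 0 (n + 1) := by
  ext i j
  · simp [linTree, path, chain]
  · simp only [linTree, path, chain, mem_Ico]
    omega

end DiGraph

/-- For the linear tree `L_n` with `n` vertices and all edges oriented in the same
direction, the coefficients defined by the recursion
`a_T = (1/n_T) Σ_v (−1)^{n_v⁺} ∏_s a_{T_s(v)}`, `a_• = 1`, satisfy
`a_{L₁} = 1`, `a_{L₃} = −1/3`, `a_{L₅} = 2/15`, `a_{L₇} = −17/315`, and `a_{L_n} = 0`
for even `n`.  (Here `linTree k` is the linear tree with `k+1` vertices.) -/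
theorem aT_linear_tree_values (a : DiGraph → ℚ) (ha : DiGraph.ARec a) :
    a (linTree 0) = 1 ∧ a (linTree 2) = -1/3 ∧ a (linTree 4) = 2/15 ∧
      a (linTree 6) = -17/315 ∧ ∀ n : ℕ, Odd n → a (linTree n) = 0 := by
  have hlin (n : ℕ) : a (linTree n) = pathCoeff (n + 1) := by
    rw [DiGraph.linTree_eq_path, ha.apply_path_eq_pathCoeff _ n.succ_pos]
  have c2 : pathCoeff 2 = 0 := pathCoeff_eq_zero_of_even even_two two_ne_zero
  have c3 : pathCoeff 3 = -1/3 := by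
    rw [pathCoeff_succ]; norm_num [sum_range_succ, pathCoeff_zero, pathCoeff_one, c2]
  have c4 : pathCoeff 4 = 0 := pathCoeff_eq_zero_of_even ⟨2, rfl⟩ (by norm_num)
  have c5 : pathCoeff 5 = 2/15 := by
    rw [pathCoeff_succ]; norm_num [sum_range_succ, pathCoeff_zero, pathCoeff_one, c2, c3, c4]
  have c6 : pathCoeff 6 = 0 := pathCoeff_eq_zero_of_even ⟨3, rfl⟩ (by norm_num)
  have c7 : pathCoeff 7 = -17/315 := by
    rw [pathCoeff_succ]
    norm_num [sum_range_succ, pathCoeff_zero, pathCoeff_one, c2, c3, c4, c5, c6]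
  simp only [hlin]
  exact ⟨pathCoeff_one, c3, c5, c7,
    fun n hn => pathCoeff_eq_zero_of_even hn.add_one n.succ_ne_zero⟩
end

section
/- Vanishing of edge sums propagates between trees: let γ_{ij} = −γ_{ji} (1 ≤ i,j ≤ n) be an antisymmetric array of real numbers, and for an unrooted labelled tree T on vertices {1,…,n} and edge e ∈ E_T define Γ_e = Σ_{i ∈ V(T_e^s)} Σ_{j ∈ V(T_e^t)} γ_{ij}, where T_e^s, T_e^t are the two components of T after removing e. If Γ_e = 0 for all e ∈ E_T, then for every other unrooted labelled tree T' on the same vertex set (with the same array γ_{ij}) one also has Γ'_e = 0 for all e ∈ E_{T'}. -/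
/-!
By antisymmetry, the edge sum of a bridge `e = ij` of a connected graph is the sum of the row
sums `r_k = Σ_l γ k l` over the side of `i`. In a tree, the sides of the edges at `v` facing away
from `v` partition the other vertices, so if all edge sums vanish then `Σ_{k ≠ v} r_k = 0`;
since `Σ_k r_k = 0`, every row sum `r_v` vanishes, and by the first fact so does every edge sum
of every tree.
-/

open scoped Classical

/-- For an antisymmetric array `γ` and a graph `T` on `Fin n`, the edge sum
`Γ_e = Σ_{k ∈ V(T_e^s)} Σ_{l ∈ V(T_e^t)} γ k l` attached to the (oriented) edge
`e = (i,j)`: here `T_e^s` and `T_e^t` are the two connected components of `T` with the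
edge `{i,j}` removed, containing `i` and `j` respectively. -/
noncomputable def edgeSum {n : ℕ} (γ : Fin n → Fin n → ℝ) (T : SimpleGraph (Fin n))
    (i j : Fin n) : ℝ :=
  ∑ k, ∑ l,
    if (T.deleteEdges {s(i, j)}).Reachable k i ∧ (T.deleteEdges {s(i, j)}).Reachable l j
    then γ k l else 0

namespace SimpleGraph

variable {V : Type*}

/-- The vertex set `V(T_e^s)` of the component of `i` once the edge `e = ij` is deleted. -/
noncomputable def edgeSide [Fintype V] (G : SimpleGraph V) (i j : V) : Finset V :=
  {k | (G.deleteEdges {s(i, j)}).Reachable k i}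

variable {G : SimpleGraph V}

@[simp]
theorem mem_edgeSide [Fintype V] {i j k : V} :
    k ∈ G.edgeSide i j ↔ (G.deleteEdges {s(i, j)}).Reachable k i := by
  simp [edgeSide]

theorem Connected.reachable_deleteEdges_or (hG : G.Connected) (i j k : V) :
    (G.deleteEdges {s(i, j)}).Reachable k i ∨ (G.deleteEdges {s(i, j)}).Reachable k j := by
  set R : V → Prop := fun x ↦
    (G.deleteEdges {s(i, j)}).Reachable x i ∨ (G.deleteEdges {s(i, j)}).Reachable x j
  have hR : ∀ {a c : V}, G.Adj a c → R c → R a := by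
    intro a c hac hc
    by_cases he : s(a, c) = s(i, j)
    · rcases Sym2.eq_iff.mp he with ⟨rfl, -⟩ | ⟨rfl, -⟩
      · exact .inl .rfl
      · exact .inr .rfl
    · have hac' : (G.deleteEdges {s(i, j)}).Adj a c := deleteEdges_adj.mpr ⟨hac, he⟩
      exact hc.imp hac'.reachable.trans hac'.reachable.trans
  have hwalk : ∀ {x : V} (p : G.Walk k x), R x → R k := by
    intro x p
    induction p with
    | nil => exact id
    | cons hac _ ih => exact hR hac ∘ ih
  exact hwalk (hG.preconnected k i).some (.inl .rfl)

theorem Connected.compl_edgeSide [Fintype V] [DecidableEq V] (hG : G.Connected) {i j : V}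
    (hb : G.IsBridge s(i, j)) : (G.edgeSide i j)ᶜ = G.edgeSide j i := by
  ext k
  rw [Finset.mem_compl, mem_edgeSide, mem_edgeSide, Sym2.eq_swap (a := j)]
  exact ⟨(hG.reachable_deleteEdges_or i j k).resolve_left,
    fun hj hi ↦ isBridge_iff.mp hb (hi.symm.trans hj)⟩

theorem IsAcyclic.isBridge_of_adj (hG : G.IsAcyclic) {i j : V} (hij : G.Adj i j) :
    G.IsBridge s(i, j) :=
  isAcyclic_iff_forall_adj_isBridge.mp hG hij

theorem IsAcyclic.right_notMem_edgeSide [Fintype V] (hG : G.IsAcyclic) {i j : V}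
    (hij : G.Adj i j) : j ∉ G.edgeSide i j :=
  fun hj ↦ isBridge_iff.mp (hG.isBridge_of_adj hij) (mem_edgeSide.mp hj).symm

theorem IsTree.existsUnique_adj_reachable_deleteEdges (hG : G.IsTree) {v k : V} (hk : k ≠ v) :
    ∃! w, G.Adj v w ∧ (G.deleteEdges {s(w, v)}).Reachable k w := by
  obtain ⟨q, hq⟩ := (hG.connected.preconnected v k).some.toPath
  cases q with
  | nil => exact absurd rfl hk
  | @cons _ u _ hvu r =>
    have hvr : v ∉ r.support := (Walk.cons_isPath_iff _ _).mp hq |>.2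
    have hur : ∀ w, (G.deleteEdges {s(w, v)}).Reachable u k := fun w ↦
      ⟨r.toDeleteEdges _ fun e he hew ↦ hvr <| by
        rw [Set.mem_singleton_iff.mp hew] at he
        exact r.snd_mem_support_of_mem_edges he⟩
    refine ⟨u, ⟨hvu, (hur u).symm⟩, fun w ⟨hvw, hkw⟩ ↦ ?_⟩
    by_contra hwu
    have hvu' : (G.deleteEdges {s(w, v)}).Adj v u := by
      refine deleteEdges_adj.mpr ⟨hvu, ?_⟩
      grind [Sym2.eq_iff, G.loopless]
    exact isBridge_iff.mp (hG.isAcyclic.isBridge_of_adj hvw.symm)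
      ((hvu'.reachable.trans ((hur w).trans hkw)).symm)

theorem IsTree.sum_neighborFinset_sum_edgeSide {M : Type*} [AddCommMonoid M] [Fintype V]
    [DecidableEq V] (hG : G.IsTree) (v : V) (f : V → M) :
    ∑ w ∈ G.neighborFinset v, ∑ k ∈ G.edgeSide w v, f k = ∑ k ∈ Finset.univ.erase v, f k := by
  have hne : ∀ {w k}, G.Adj v w → k ∈ G.edgeSide w v → k ≠ v := by
    rintro w k hvw hk rfl
    exact hG.isAcyclic.right_notMem_edgeSide hvw.symm hk
  have hdisj : (G.neighborFinset v : Set V).PairwiseDisjoint (G.edgeSide · v) := by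
    intro w hw w' hw' hww'
    rw [Finset.mem_coe, mem_neighborFinset] at hw hw'
    refine Finset.disjoint_left.mpr fun k hk hk' ↦ hww' ?_
    exact (hG.existsUnique_adj_reachable_deleteEdges (hne hw hk)).unique
      ⟨hw, mem_edgeSide.mp hk⟩ ⟨hw', mem_edgeSide.mp hk'⟩
  have hcover : (G.neighborFinset v).biUnion (G.edgeSide · v) = Finset.univ.erase v := by
    ext k
    simp only [Finset.mem_biUnion, mem_neighborFinset, Finset.mem_erase, Finset.mem_univ, and_true]
    refine ⟨fun ⟨w, hvw, hk⟩ ↦ hne hvw hk, fun hk ↦ ?_⟩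
    obtain ⟨w, ⟨hvw, hkw⟩, -⟩ := hG.existsUnique_adj_reachable_deleteEdges hk
    exact ⟨w, hvw, mem_edgeSide.mpr hkw⟩
  rw [← hcover, Finset.sum_biUnion hdisj]

end SimpleGraph

section Antisymmetric

variable {ι M : Type*} [AddCommGroup M] {γ : ι → ι → M}

theorem Finset.sum_sum_eq_zero_of_antisymm [IsAddTorsionFree M] (hγ : ∀ i j, γ i j = -γ j i)
    (s : Finset ι) : ∑ k ∈ s, ∑ l ∈ s, γ k l = 0 := by
  refine self_eq_neg.mp ?_
  calc ∑ k ∈ s, ∑ l ∈ s, γ k l = ∑ l ∈ s, ∑ k ∈ s, γ k l := Finset.sum_comm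
    _ = ∑ l ∈ s, ∑ k ∈ s, -γ l k :=
      Finset.sum_congr rfl fun l _ ↦ Finset.sum_congr rfl fun k _ ↦ hγ k l
    _ = -∑ k ∈ s, ∑ l ∈ s, γ k l := by simp only [Finset.sum_neg_distrib]

theorem Finset.sum_sum_compl_eq_of_antisymm [IsAddTorsionFree M] [Fintype ι] [DecidableEq ι]
    (hγ : ∀ i j, γ i j = -γ j i) (s : Finset ι) :
    ∑ k ∈ s, ∑ l ∈ sᶜ, γ k l = ∑ k ∈ s, ∑ l, γ k l := by
  simp only [← Finset.sum_add_sum_compl s (γ _), Finset.sum_add_distrib,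
    sum_sum_eq_zero_of_antisymm hγ, zero_add]

end Antisymmetric

section EdgeSum

variable {n : ℕ} {γ : Fin n → Fin n → ℝ} {T : SimpleGraph (Fin n)}

theorem edgeSum_eq_sum_edgeSide (i j : Fin n) :
    edgeSum γ T i j = ∑ k ∈ T.edgeSide i j, ∑ l ∈ T.edgeSide j i, γ k l := by
  simp only [edgeSum, SimpleGraph.edgeSide, Finset.sum_filter, ite_and, Finset.sum_ite_irrel,
    Finset.sum_const_zero, Sym2.eq_swap (a := j)]
  congr!

theorem edgeSum_eq_sum_rowSum (hγ : ∀ i j, γ i j = -γ j i) (hT : T.Connected) {i j : Fin n}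
    (hb : T.IsBridge s(i, j)) : edgeSum γ T i j = ∑ k ∈ T.edgeSide i j, ∑ l, γ k l := by
  rw [edgeSum_eq_sum_edgeSide, ← hT.compl_edgeSide hb, Finset.sum_sum_compl_eq_of_antisymm hγ]

theorem rowSum_eq_zero_of_edgeSum_eq_zero (hγ : ∀ i j, γ i j = -γ j i) (hT : T.IsTree)
    (h : ∀ i j, T.Adj i j → edgeSum γ T i j = 0) (v : Fin n) : ∑ l, γ v l = 0 := by
  have hbranches : ∑ k ∈ Finset.univ.erase v, ∑ l, γ k l = 0 := by
    rw [← hT.sum_neighborFinset_sum_edgeSide]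
    refine Finset.sum_eq_zero fun w hw ↦ ?_
    have hwv := ((T.mem_neighborFinset v w).mp hw).symm
    rw [← edgeSum_eq_sum_rowSum hγ hT.connected (hT.isAcyclic.isBridge_of_adj hwv), h w v hwv]
  have htotal := Finset.sum_sum_eq_zero_of_antisymm hγ Finset.univ
  rwa [← Finset.add_sum_erase _ _ (Finset.mem_univ v), hbranches, add_zero] at htotal

end EdgeSum

/-- Vanishing of edge sums propagates between trees: if `γ` is antisymmetric and all the
edge sums `Γ_e` of a tree `T` on `{1,…,n}` vanish, then the edge sums of every other
tree `T'` on the same vertex set (with the same `γ`) vanish as well. -/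
theorem edgeSum_vanishing_propagates (n : ℕ) (γ : Fin n → Fin n → ℝ)
    (hγ : ∀ i j, γ i j = - γ j i)
    (T T' : SimpleGraph (Fin n)) (hT : T.IsTree) (hT' : T'.IsTree)
    (h : ∀ i j, T.Adj i j → edgeSum γ T i j = 0) :
    ∀ i j, T'.Adj i j → edgeSum γ T' i j = 0 := by
  intro i j hij
  rw [edgeSum_eq_sum_rowSum hγ hT'.connected (hT'.isAcyclic.isBridge_of_adj hij)]
  exact Finset.sum_eq_zero fun k _ ↦ rowSum_eq_zero_of_edgeSum_eq_zero hγ hT h k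
end

section
/- For each tree T, the edge sums Γ_e (e ∈ E_T) are linearly independent as linear functionals of the antisymmetric array (γ_{ij}); hence they span an (n−1)-dimensional subspace of the (n(n−1)/2)-dimensional space of antisymmetric arrays' dual. -/
open scoped Classical

/-!
Test the relation against the elementary antisymmetric array `γ = e_k ⊗ e_l - e_l ⊗ e_k` of an
edge `k → l`. For any other edge `e`, the endpoints `k, l` stay joined in `T - e`, so they lie
in the same component and the two contributions to `Γ_e(γ)` cancel; for `e = kl` itself, `kl`
is a bridge of the tree, so `Γ_{kl}(γ) = 1`. Hence the relation reduces to `c k l = 0`.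
-/

section EdgeSum

variable {n : ℕ}

def antisymmSingle (k l : Fin n) : Fin n → Fin n → ℝ :=
  Pi.single k (Pi.single l 1) - Pi.single l (Pi.single k 1)

theorem antisymmSingle_apply_swap (k l i j : Fin n) :
    antisymmSingle k l i j = -antisymmSingle k l j i := by
  simp only [antisymmSingle, Pi.sub_apply, Pi.single_apply]
  split_ifs <;> simp_all

theorem edgeSum_sub (γ γ' : Fin n → Fin n → ℝ) (T : SimpleGraph (Fin n)) (i j : Fin n) :
    edgeSum (γ - γ') T i j = edgeSum γ T i j - edgeSum γ' T i j := by
  simp only [edgeSum, ← Finset.sum_sub_distrib, Pi.sub_apply, ite_sub_ite, sub_zero]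

theorem edgeSum_single (T : SimpleGraph (Fin n)) (a b i j : Fin n) :
    edgeSum (Pi.single a (Pi.single b 1)) T i j =
      if (T.deleteEdges {s(i, j)}).Reachable a i ∧ (T.deleteEdges {s(i, j)}).Reachable b j
      then 1 else 0 := by
  rw [edgeSum, Fintype.sum_eq_single a fun x hx => by simp [hx],
    Fintype.sum_eq_single b fun y hy => by simp [hy]]
  simp

theorem edgeSum_antisymmSingle (T : SimpleGraph (Fin n)) (k l i j : Fin n) :
    edgeSum (antisymmSingle k l) T i j =
      (if (T.deleteEdges {s(i, j)}).Reachable k i ∧ (T.deleteEdges {s(i, j)}).Reachable l j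
        then 1 else 0) -
      (if (T.deleteEdges {s(i, j)}).Reachable l i ∧ (T.deleteEdges {s(i, j)}).Reachable k j
        then 1 else 0) := by
  rw [antisymmSingle, edgeSum_sub, edgeSum_single, edgeSum_single]

theorem edgeSum_antisymmSingle_eq_zero {T : SimpleGraph (Fin n)} {k l i j : Fin n}
    (h : (T.deleteEdges {s(i, j)}).Reachable k l) :
    edgeSum (antisymmSingle k l) T i j = 0 := by
  have hi : (T.deleteEdges {s(i, j)}).Reachable k i ↔ (T.deleteEdges {s(i, j)}).Reachable l i :=
    ⟨h.symm.trans, h.trans⟩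
  have hj : (T.deleteEdges {s(i, j)}).Reachable l j ↔ (T.deleteEdges {s(i, j)}).Reachable k j :=
    ⟨h.trans, h.symm.trans⟩
  simp only [edgeSum_antisymmSingle, hi, hj, sub_self]

theorem SimpleGraph.IsAcyclic.edgeSum_antisymmSingle_self {T : SimpleGraph (Fin n)}
    (hT : T.IsAcyclic) {k l : Fin n} (hkl : T.Adj k l) :
    edgeSum (antisymmSingle k l) T k l = 1 := by
  have hbridge : ¬(T.deleteEdges {s(k, l)}).Reachable l k := fun h =>
    SimpleGraph.isBridge_iff.mp (SimpleGraph.isAcyclic_iff_forall_adj_isBridge.mp hT hkl) h.symm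
  simp [edgeSum_antisymmSingle, hbridge]

end EdgeSum

theorem SimpleGraph.Adj.reachable_deleteEdges_singleton {V : Type*} {G : SimpleGraph V}
    {u v : V} {e : Sym2 V} (h : G.Adj u v) (he : s(u, v) ≠ e) :
    (G.deleteEdges {e}).Reachable u v :=
  (SimpleGraph.deleteEdges_adj.mpr ⟨h, he⟩).reachable

/-- For a tree `T` on `n` vertices (with orientation `E`), the edge sums `Γ_e` are
linearly independent as linear functionals of the antisymmetric array `γ`: any real
coefficients `c` such that `Σ_e c_e Γ_e(γ) = 0` for every antisymmetric `γ` must vanish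
on all edges.  Hence, since a tree has `n−1` edges, the `Γ_e` span an
`(n−1)`-dimensional subspace of the dual of the `n(n−1)/2`-dimensional space of
antisymmetric arrays. -/
theorem edgeSum_linearly_independent (n : ℕ)
    (T : SimpleGraph (Fin n)) (hT : T.IsTree)
    (E : Fin n → Fin n → Prop)
    (hE : ∀ i j, T.Adj i j ↔ (E i j ∨ E j i))
    (hE' : ∀ i j, E i j → ¬ E j i)
    (c : Fin n → Fin n → ℝ)
    (hc : ∀ γ : Fin n → Fin n → ℝ, (∀ i j, γ i j = - γ j i) →
      (∑ k, ∑ l, if E k l then c k l * edgeSum γ T k l else 0) = 0) :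
    ∀ k l, E k l → c k l = 0 := by
  intro k l hkl
  have hadj : T.Adj k l := (hE k l).2 (Or.inl hkl)
  have hvanish : ∀ p : Fin n × Fin n, p ≠ (k, l) →
      (if E p.1 p.2 then c p.1 p.2 * edgeSum (antisymmSingle k l) T p.1 p.2 else 0) = 0 := by
    rintro ⟨i, j⟩ hij
    split_ifs with hEij
    · have hne : s(k, l) ≠ s(i, j) := by
        rw [ne_eq, Sym2.eq_iff]
        rintro (⟨rfl, rfl⟩ | ⟨rfl, rfl⟩)
        · exact hij rfl
        · exact hE' k l hkl hEij
      rw [edgeSum_antisymmSingle_eq_zero (hadj.reachable_deleteEdges_singleton hne), mul_zero]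
    · rfl
  have hsum := hc (antisymmSingle k l) (antisymmSingle_apply_swap k l)
  rwa [← Fintype.sum_prod_type', Fintype.sum_eq_single (k, l) hvanish, if_pos hkl,
    hT.isAcyclic.edgeSum_antisymmSingle_self hadj, mul_one] at hsum
end
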